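/- arXiv:0905.3714 — 2 statements merged into one kernel-verified Lean document; each statement's English description precedes it below -/
import Mathlib

section
/- Let g be a Lie algebra graded by the integers via ad h eigenspaces, g = ⊕_j g(j), let e ∈ g(2), and set χ(x) = (e,x) for a nondegenerate invariant symmetric form pairing g(j) with g(-j). Let m = g(-1)⁰ ⊕ ⊕_{i ≤ -2} g(i), where g(-1)⁰ ⊆ g(-1) is a Lagrangian subspace for ⟨x,y⟩ = χ([x,y]). Then χ restricts to a character of the Lie algebra m, i.e. χ([x,y]) = 0 for all x,y ∈ m. -/
/-- `χ` restricts to a character of `m = g(-1)⁰ ⊕ ⊕_{i ≤ -2} g(i)`,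
i.e. `χ([x,y]) = 0` for all `x, y ∈ m`. -/
theorem chi_restricts_to_character_of_m
    {g : Type*} [LieRing g] [LieAlgebra ℂ g]
    (gsp : ℤ → Submodule ℂ g)
    -- the grading is compatible with the bracket
    (hbr : ∀ i j : ℤ, ∀ x y : g, x ∈ gsp i → y ∈ gsp j → ⁅x, y⁆ ∈ gsp (i + j))
    (B : g →ₗ[ℂ] g →ₗ[ℂ] ℂ)
    (hsymm : ∀ x y : g, B x y = B y x)
    (hnondeg : ∀ x : g, (∀ y : g, B x y = 0) → x = 0)
    (hinv : ∀ x y z : g, B ⁅x, y⁆ z = B x ⁅y, z⁆)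
    -- the form pairs `g(i)` with `g(-i)`
    (hpair : ∀ i j : ℤ, i + j ≠ 0 → ∀ x ∈ gsp i, ∀ y ∈ gsp j, B x y = 0)
    (e : g) (he : e ∈ gsp 2)
    (χ : g → ℂ) (hχ : ∀ x, χ x = B e x)
    -- `L = g(-1)⁰` is an isotropic (Lagrangian) subspace of `g(-1)` for `⟨x,y⟩ = χ([x,y])`
    (L : Submodule ℂ g) (hL : L ≤ gsp (-1))
    (hiso : ∀ x ∈ L, ∀ y ∈ L, χ ⁅x, y⁆ = 0)
    (m : Submodule ℂ g)
    (hm : m = L ⊔ ⨆ i : {i : ℤ // i ≤ -2}, gsp i) :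
    ∀ x ∈ m, ∀ y ∈ m, χ ⁅x, y⁆ = 0 := by
  classical
  set C : g →ₗ[ℂ] g →ₗ[ℂ] ℂ := LinearMap.mk₂ ℂ (fun x y => B e ⁅x, y⁆)
    (fun x₁ x₂ y => by simp [add_lie])
    (fun c x y => by simp [smul_lie])
    (fun x y₁ y₂ => by simp [lie_add])
    (fun c x y => by simp [lie_smul]) with hC
  have base : ∀ x, (x ∈ L ∨ ∃ i : ℤ, i ≤ -2 ∧ x ∈ gsp i) →
      ∀ y, (y ∈ L ∨ ∃ i : ℤ, i ≤ -2 ∧ y ∈ gsp i) → C x y = 0 := by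
    rintro x (hx | ⟨i, hi, hx⟩) y (hy | ⟨j, hj, hy⟩)
    · have := hiso x hx y hy
      rw [hχ] at this
      simpa [hC] using this
    · show B e ⁅x, y⁆ = 0
      exact hpair 2 (-1 + j) (by omega) e he _ (hbr _ _ _ _ (hL hx) hy)
    · show B e ⁅x, y⁆ = 0
      exact hpair 2 (i + -1) (by omega) e he _ (hbr _ _ _ _ hx (hL hy))
    · show B e ⁅x, y⁆ = 0
      exact hpair 2 (i + j) (by omega) e he _ (hbr _ _ _ _ hx hy)
  have step2 : ∀ y, (y ∈ L ∨ ∃ i : ℤ, i ≤ -2 ∧ y ∈ gsp i) → ∀ x ∈ m, C x y = 0 := by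
    intro y hy x hx
    have hsub : m ≤ LinearMap.ker (C.flip y) := by
      rw [hm]
      apply sup_le
      · intro z hz
        simpa [LinearMap.mem_ker] using base z (Or.inl hz) y hy
      · apply iSup_le
        rintro ⟨i, hi⟩ z hz
        simpa [LinearMap.mem_ker] using base z (Or.inr ⟨i, hi, hz⟩) y hy
    simpa [LinearMap.mem_ker] using hsub hx
  intro x hx y hy
  have hsub : m ≤ LinearMap.ker (C x) := by
    rw [hm]
    apply sup_le
    · intro z hz
      simpa [LinearMap.mem_ker] using step2 z (Or.inl hz) x hx
    · apply iSup_le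
      rintro ⟨i, hi⟩ z hz
      simpa [LinearMap.mem_ker] using step2 z (Or.inr ⟨i, hi, hz⟩) x hx
  have h0 : C x y = 0 := hsub hy
  rw [hχ]
  simpa [hC] using h0
end

section
/- Let A be an associative ℂ-algebra and ρ : A → ℂ an algebra homomorphism. Suppose elements Θ_1,…,Θ_6 ∈ A satisfy the relations [Θ_4,Θ_6] = -2Θ_4, [Θ_5,Θ_6] = 2Θ_5, [Θ_1,Θ_6] = -Θ_1, [Θ_2,Θ_6] = Θ_2, [Θ_4,Θ_5] = (1/2)·1 + Θ_6, and [Θ_1,Θ_2] = 5Θ_3Θ_4Θ_5 - (1/2)Θ_3² - Θ_3Θ_6² + 9Θ_4Θ_5Θ_6² - (9/2)Θ_4²Θ_5² + 7Θ_3Θ_6 - (69/2)Θ_4Θ_5Θ_6 + 6Θ_6³ - 6Θ_3 + (93/4)Θ_4Θ_5 - 30Θ_6² + 42Θ_6 - 18·1. Then ρ(Θ_1)=ρ(Θ_2)=ρ(Θ_4)=ρ(Θ_5)=0, ρ(Θ_6) = -1/2, and ρ(Θ_3) ∈ {-9, -21/2}. -/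
/-- determination of all 1-dimensional representations of the finite
`W`-algebra of type `G₂` with `e` a short root vector, from the presentation. -/
theorem g2_one_dimensional_representations
    {A : Type*} [Ring A] [Algebra ℂ A]
    (ρ : A →ₐ[ℂ] ℂ)
    (Θ₁ Θ₂ Θ₃ Θ₄ Θ₅ Θ₆ : A)
    (h46 : Θ₄ * Θ₆ - Θ₆ * Θ₄ = -(2 : ℂ) • Θ₄)
    (h56 : Θ₅ * Θ₆ - Θ₆ * Θ₅ = (2 : ℂ) • Θ₅)
    (h16 : Θ₁ * Θ₆ - Θ₆ * Θ₁ = -Θ₁)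
    (h26 : Θ₂ * Θ₆ - Θ₆ * Θ₂ = Θ₂)
    (h45 : Θ₄ * Θ₅ - Θ₅ * Θ₄ = (1/2 : ℂ) • (1 : A) + Θ₆)
    (h12 : Θ₁ * Θ₂ - Θ₂ * Θ₁ =
      (5 : ℂ) • (Θ₃ * Θ₄ * Θ₅) - (1/2 : ℂ) • (Θ₃ ^ 2) - Θ₃ * Θ₆ ^ 2
      + (9 : ℂ) • (Θ₄ * Θ₅ * Θ₆ ^ 2) - (9/2 : ℂ) • (Θ₄ ^ 2 * Θ₅ ^ 2)
      + (7 : ℂ) • (Θ₃ * Θ₆) - (69/2 : ℂ) • (Θ₄ * Θ₅ * Θ₆) + (6 : ℂ) • (Θ₆ ^ 3)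
      - (6 : ℂ) • Θ₃ + (93/4 : ℂ) • (Θ₄ * Θ₅) - (30 : ℂ) • (Θ₆ ^ 2)
      + (42 : ℂ) • Θ₆ - (18 : ℂ) • (1 : A)) :
    ρ Θ₁ = 0 ∧ ρ Θ₂ = 0 ∧ ρ Θ₄ = 0 ∧ ρ Θ₅ = 0 ∧ ρ Θ₆ = -1/2 ∧
      (ρ Θ₃ = -9 ∨ ρ Θ₃ = -21/2) := by
  have e46 := congrArg ρ h46
  have e56 := congrArg ρ h56
  have e16 := congrArg ρ h16
  have e26 := congrArg ρ h26
  have e45 := congrArg ρ h45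
  have e12 := congrArg ρ h12
  simp only [map_sub, map_add, map_mul, map_smul, map_pow, map_neg, map_one,
    smul_eq_mul] at e46 e56 e16 e26 e45 e12
  have h4 : ρ Θ₄ = 0 := by linear_combination (1/2 : ℂ) * e46
  have h5 : ρ Θ₅ = 0 := by linear_combination (-1/2 : ℂ) * e56
  have h1 : ρ Θ₁ = 0 := by linear_combination e16
  have h2 : ρ Θ₂ = 0 := by linear_combination -e26
  have h6 : ρ Θ₆ = -1/2 := by linear_combination -e45
  refine ⟨h1, h2, h4, h5, h6, ?_⟩
  have key : (ρ Θ₃ + 9) * (ρ Θ₃ + 21/2) = 0 := by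
    rw [h4, h5, h6] at e12
    linear_combination (2 : ℂ) * e12
  rcases mul_eq_zero.1 key with h | h
  · left; linear_combination h
  · right; linear_combination h
end
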